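/- Let Q be a bounded sublinear rate operator on ℬ, and for each t ≥ 0 let e^{tQ} denote the limit in operator seminorm of the sequence ((I + (t/n)Q)^n)_{n∈ℕ}. Then for all s, t ≥ 0, ‖e^{sQ} − e^{tQ}‖ ≤ |s − t|·‖Q‖; consequently the map t ↦ e^{tQ} is Lipschitz continuous with respect to the operator seminorm. -/

import Mathlib

open Filter Topology BoundedContinuousFunction ENNReal NNReal

/-- The space of (possibly nonlinear) operators on the Banach space `X →ᵇ ℝ`
of bounded (continuous, i.e. with `X` discrete: all) real-valued functions. -/
abbrev Op (X : Type*) [TopologicalSpace X] :=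
  BoundedContinuousFunction X ℝ → BoundedContinuousFunction X ℝ

/-- The operator seminorm `‖A‖ = sup {‖A f‖/‖f‖ : f ≠ 0}`, a value in `[0,∞]`. -/
noncomputable def opSemiNorm {X : Type*} [TopologicalSpace X] (A : Op X) : ℝ≥0∞ :=
  ⨆ (f : BoundedContinuousFunction X ℝ) (_ : f ≠ 0), (‖A f‖₊ : ℝ≥0∞) / (‖f‖₊ : ℝ≥0∞)

/-- The operator norm distance `d(A,B) = ‖A 0 − B 0‖∞ + ‖A − B‖`. -/
noncomputable def opDist {X : Type*} [TopologicalSpace X] (A B : Op X) : ℝ≥0∞ :=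
  (‖A 0 - B 0‖₊ : ℝ≥0∞) + opSemiNorm (A - B)

/-- Sublinear transition operator: (T1) positive homogeneity, (T2) subadditivity,
(T3) `T f ≤ sup f` pointwise. -/
def IsSublinearTransition {X : Type*} [TopologicalSpace X] (T : Op X) : Prop :=
  (∀ (c : ℝ), 0 ≤ c → ∀ f, T (c • f) = c • T f) ∧
  (∀ f g, ∀ x, T (f + g) x ≤ T f x + T g x) ∧
  (∀ f, ∀ x, T f x ≤ ⨆ y, f y)

/-- Sublinear rate operator: (Q1) positive homogeneity, (Q2) subadditivity,
(Q3) constants map to zero, (Q4) positive maximum principle. -/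
def IsSublinearRate {X : Type*} [TopologicalSpace X] (Q : Op X) : Prop :=
  (∀ (c : ℝ), 0 ≤ c → ∀ f, Q (c • f) = c • Q f) ∧
  (∀ f g, ∀ x, Q (f + g) x ≤ Q f x + Q g x) ∧
  (∀ (c : ℝ), Q (BoundedContinuousFunction.const X c) = 0) ∧
  (∀ f, ∀ x : X, (⨆ y, f y) = f x → 0 ≤ f x → Q f x ≤ 0)

/-- The Euler approximation `(I + (t/n) Q)^n` (n-fold composition). -/
noncomputable def euler {X : Type*} [TopologicalSpace X] (Q : Op X) (t : ℝ) (n : ℕ) : Op X :=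
  (fun f => f + (t / (n : ℝ)) • Q f)^[n]

/-- Uniform continuity of a semigroup `(S_t)_{t ≥ 0}`:
`‖S_s − S_t‖ → 0` as `s → t` (within `s ≥ 0`), for every `t ≥ 0`. -/
def IsUniformlyContinuousSG {X : Type*} [TopologicalSpace X] (S : ℝ → Op X) : Prop :=
  ∀ t : ℝ, 0 ≤ t →
    Tendsto (fun s => opSemiNorm (S s - S t)) (nhdsWithin t (Set.Ici 0)) (nhds 0)

/-- The indicator function `1_x` of the singleton `{x}`. -/
noncomputable def indic {X : Type*} [TopologicalSpace X] [DiscreteTopology X] (x : X) :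
    BoundedContinuousFunction X ℝ :=
  BoundedContinuousFunction.ofNormedAddCommGroup
    (Set.indicator {x} (fun _ => (1 : ℝ))) continuous_of_discreteTopology 1
    (by
      intro y
      classical
      rw [Set.indicator_apply]
      split_ifs <;> simp)

/-- Downward continuity (continuity from above) of an operator. -/
def DownwardContinuous {X : Type*} [TopologicalSpace X] (A : Op X) : Prop :=
  ∀ (f : ℕ → BoundedContinuousFunction X ℝ) (g : BoundedContinuousFunction X ℝ),
    (∀ n x, f (n + 1) x ≤ f n x) →
    (∀ x, Tendsto (fun n => f n x) atTop (nhds (g x))) →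
    ∀ x, Tendsto (fun n => A (f n) x) atTop (nhds (A g x))

/-! For `a ‖Q‖ ≤ 1` the Euler step `I + aQ` is nonexpansive in the sup norm. Indeed, the
positive maximum principle applied at `x` to `f`, shifted so that its supremum is `0` and
raised at `x` to that supremum, gives `Qf(x) ≤ ‖Q‖ (sup f - f(x))`; with subadditivity this
bounds `(f + aQf)(x) - (g + aQg)(x)` by a convex combination of `h(x)` and `sup h`, where
`h = f - g`. Two Euler schemes with steps `s/n` and `t/n` then drift apart by at most
`|s/n - t/n| ‖Q‖ ‖f‖` per step, hence by `|s - t| ‖Q‖ ‖f‖` after `n` steps, and this bound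
survives the limit because the operator seminorm is subadditive. -/

section OpSemiNorm

variable {X : Type*} [TopologicalSpace X]

lemma opSemiNorm_le_iff {A : Op X} {c : ℝ≥0∞} :
    opSemiNorm A ≤ c ↔ ∀ f, f ≠ 0 → (‖A f‖₊ : ℝ≥0∞) ≤ c * ‖f‖₊ := by
  refine iSup₂_le_iff.trans (forall₂_congr fun f hf => ?_)
  exact ENNReal.div_le_iff_le_mul (Or.inl (by simpa using hf)) (Or.inl ENNReal.coe_ne_top)

lemma nnnorm_apply_le_opSemiNorm_mul (A : Op X) {f : X →ᵇ ℝ} (hf : f ≠ 0) :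
    (‖A f‖₊ : ℝ≥0∞) ≤ opSemiNorm A * ‖f‖₊ :=
  opSemiNorm_le_iff.1 le_rfl f hf

lemma norm_apply_le_toReal_opSemiNorm_mul {A : Op X} (hA : opSemiNorm A ≠ ⊤) (hA0 : A 0 = 0)
    (f : X →ᵇ ℝ) : ‖A f‖ ≤ (opSemiNorm A).toReal * ‖f‖ := by
  rcases eq_or_ne f 0 with rfl | hf
  · simp [hA0]
  · simpa using ENNReal.toReal_mono (ENNReal.mul_ne_top hA ENNReal.coe_ne_top)
      (nnnorm_apply_le_opSemiNorm_mul A hf)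

lemma opSemiNorm_le_ofReal {A : Op X} {c : ℝ} (h : ∀ f, ‖A f‖ ≤ c * ‖f‖) :
    opSemiNorm A ≤ ENNReal.ofReal c := by
  refine opSemiNorm_le_iff.2 fun f _ => ?_
  rw [← enorm_eq_nnnorm, ← enorm_eq_nnnorm, ← ofReal_norm, ← ofReal_norm,
    ← ENNReal.ofReal_mul' (norm_nonneg f)]
  exact ENNReal.ofReal_le_ofReal (h f)

lemma opSemiNorm_add_le (A B : Op X) : opSemiNorm (A + B) ≤ opSemiNorm A + opSemiNorm B := by
  refine opSemiNorm_le_iff.2 fun f hf => ?_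
  calc (‖(A + B) f‖₊ : ℝ≥0∞) ≤ ‖A f‖₊ + ‖B f‖₊ := by exact_mod_cast nnnorm_add_le _ _
    _ ≤ opSemiNorm A * ‖f‖₊ + opSemiNorm B * ‖f‖₊ :=
      add_le_add (nnnorm_apply_le_opSemiNorm_mul A hf) (nnnorm_apply_le_opSemiNorm_mul B hf)
    _ = (opSemiNorm A + opSemiNorm B) * ‖f‖₊ := (add_mul _ _ _).symm

lemma opSemiNorm_sub_comm (A B : Op X) : opSemiNorm (A - B) = opSemiNorm (B - A) := by
  simp only [opSemiNorm, Pi.sub_apply, ← enorm_eq_nnnorm, enorm_sub_rev]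

lemma opSemiNorm_sub_le_opDist (A B : Op X) : opSemiNorm (A - B) ≤ opDist A B :=
  le_add_self

lemma opSemiNorm_sub_le_of_tendsto {A B : Op X} {An Bn : ℕ → Op X} {c : ℝ≥0∞}
    (hA : Tendsto (fun n => opDist (An n) A) atTop (𝓝 0))
    (hB : Tendsto (fun n => opDist (Bn n) B) atTop (𝓝 0))
    (h : ∀ᶠ n in atTop, opSemiNorm (An n - Bn n) ≤ c) :
    opSemiNorm (A - B) ≤ c := by
  have hlim : Tendsto (fun n => opDist (An n) A + c + opDist (Bn n) B) atTop (𝓝 c) := by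
    simpa using (hA.add tendsto_const_nhds).add hB
  refine ge_of_tendsto hlim (h.mono fun n hn => ?_)
  calc opSemiNorm (A - B) = opSemiNorm ((A - An n) + (An n - Bn n) + (Bn n - B)) := by
        congr 1; abel
    _ ≤ opSemiNorm (A - An n) + opSemiNorm (An n - Bn n) + opSemiNorm (Bn n - B) :=
        (opSemiNorm_add_le _ _).trans (add_le_add_left (opSemiNorm_add_le _ _) _)
    _ ≤ opDist (An n) A + c + opDist (Bn n) B := by
        rw [opSemiNorm_sub_comm A]
        gcongr <;> exact opSemiNorm_sub_le_opDist _ _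

end OpSemiNorm

section Indicator

variable {X : Type*} [TopologicalSpace X] [DiscreteTopology X]

@[simp]
lemma indic_apply_self (x : X) : indic x x = 1 := by
  simp [indic]

lemma indic_apply_of_ne {x y : X} (h : y ≠ x) : indic x y = 0 := by
  simp [indic, h]

lemma norm_indic_le (x : X) : ‖indic x‖ ≤ 1 := by
  refine (norm_le zero_le_one).2 fun y => ?_
  by_cases h : y = x
  · simp [h]
  · simp [indic_apply_of_ne h]

end Indicator

namespace IsSublinearRate

variable {X : Type*} [TopologicalSpace X] {Q : Op X}

lemma map_zero (hQ : IsSublinearRate Q) : Q 0 = 0 := by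
  simpa using hQ.1 0 le_rfl 0

lemma sub_apply_le (hQ : IsSublinearRate Q) (f g : X →ᵇ ℝ) (x : X) :
    Q f x - Q g x ≤ Q (f - g) x := by
  have := hQ.2.1 (f - g) g x
  rw [sub_add_cancel] at this
  linarith

lemma map_add_const (hQ : IsSublinearRate Q) (f : X →ᵇ ℝ) (c : ℝ) :
    Q (f + const X c) = Q f := by
  ext x
  have h₁ := hQ.sub_apply_le (f + const X c) (const X c) x
  have h₂ := hQ.sub_apply_le f (const X (-c)) x
  rw [add_sub_cancel_right, hQ.2.2.1] at h₁
  rw [show f - const X (-c) = f + const X c by ext; simp, hQ.2.2.1] at h₂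
  simp only [BoundedContinuousFunction.coe_zero, Pi.zero_apply, sub_zero] at h₁ h₂
  linarith

lemma apply_le_mul_iSup_sub [DiscreteTopology X] (hQ : IsSublinearRate Q)
    (hQb : opSemiNorm Q ≠ ⊤) (f : X →ᵇ ℝ) (x : X) :
    Q f x ≤ (opSemiNorm Q).toReal * ((⨆ y, f y) - f x) := by
  have : Nonempty X := ⟨x⟩
  set C := (opSemiNorm Q).toReal
  set M := ⨆ y, f y
  have hfM : ∀ y, f y ≤ M := le_ciSup f.isBounded_range.bddAbove
  have hs : 0 ≤ M - f x := sub_nonneg.2 (hfM x)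
  set g := f + const X (-M) + (M - f x) • indic x
  have hgx : g x = 0 := by simp [g]; ring
  have hg : ∀ y, g y ≤ g x := fun y => by
    by_cases hy : y = x
    · rw [hy]
    · simp [g, indic_apply_of_ne hy, hgx, hfM y]
  have hQg : Q g x ≤ 0 := hQ.2.2.2 g x
    (le_antisymm (ciSup_le hg) (le_ciSup g.isBounded_range.bddAbove x)) hgx.ge
  have hbump : Q (-((M - f x) • indic x)) x ≤ C * (M - f x) :=
    calc Q (-((M - f x) • indic x)) x ≤ ‖Q (-((M - f x) • indic x))‖ := apply_le_norm _ x
      _ ≤ C * ‖-((M - f x) • indic x)‖ :=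
        norm_apply_le_toReal_opSemiNorm_mul hQb hQ.map_zero _
      _ ≤ C * (M - f x) := by
        rw [norm_neg, norm_smul, Real.norm_of_nonneg hs]
        gcongr
        exact mul_le_of_le_one_right hs (norm_indic_le x)
  calc Q f x = Q (f + const X (-M)) x := by rw [hQ.map_add_const]
    _ ≤ Q g x + Q (-((M - f x) • indic x)) x := by
        have := hQ.sub_apply_le (f + const X (-M)) g x
        rw [show f + const X (-M) - g = -((M - f x) • indic x) by simp [g]] at this
        linarith
    _ ≤ C * (M - f x) := by linarith

end IsSublinearRate

lemma dist_iterate_le_of_lipschitzWith_one {α : Type*} [PseudoMetricSpace α] {T S : α → α}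
    (hT : LipschitzWith 1 T) {δ : ℝ} {x : α} (h : ∀ k, dist (T (S^[k] x)) (S (S^[k] x)) ≤ δ)
    (k : ℕ) : dist (T^[k] x) (S^[k] x) ≤ k * δ := by
  induction k with
  | zero => simp
  | succ k ih =>
    rw [Function.iterate_succ_apply', Function.iterate_succ_apply']
    calc dist (T (T^[k] x)) (S (S^[k] x))
        ≤ dist (T (T^[k] x)) (T (S^[k] x)) + dist (T (S^[k] x)) (S (S^[k] x)) :=
          dist_triangle _ _ _
      _ ≤ k * δ + δ := by
          gcongr
          · simpa using hT.dist_le_mul (T^[k] x) (S^[k] x) |>.trans (by simpa using ih)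
          · exact h k
      _ = (k + 1 : ℕ) * δ := by push_cast; ring

section EulerScheme

variable {X : Type*} [TopologicalSpace X] {Q : Op X}

def eulerStep (Q : Op X) (a : ℝ) : Op X := fun f => f + a • Q f

lemma euler_eq_iterate_eulerStep (Q : Op X) (t : ℝ) (n : ℕ) :
    euler Q t n = (eulerStep Q (t / n))^[n] :=
  rfl

lemma norm_eulerStep_sub_eulerStep_le (Q : Op X) (a b : ℝ) (f : X →ᵇ ℝ) :
    ‖eulerStep Q a f - eulerStep Q b f‖ ≤ |a - b| * ‖Q f‖ := by
  rw [eulerStep, eulerStep, add_sub_add_left_eq_sub, ← sub_smul a b (Q f), norm_smul,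
    Real.norm_eq_abs]

variable [DiscreteTopology X] (hQ : IsSublinearRate Q) (hQb : opSemiNorm Q ≠ ⊤)
  {a : ℝ} (ha : 0 ≤ a) (haQ : a * (opSemiNorm Q).toReal ≤ 1)
include hQ hQb ha haQ

lemma eulerStep_sub_apply_le (f g : X →ᵇ ℝ) (x : X) :
    eulerStep Q a f x - eulerStep Q a g x ≤ ‖f - g‖ := by
  have : Nonempty X := ⟨x⟩
  set C := (opSemiNorm Q).toReal
  set h := f - g
  have hQh : Q f x - Q g x ≤ C * ((⨆ y, h y) - h x) :=
    (hQ.sub_apply_le f g x).trans (hQ.apply_le_mul_iSup_sub hQb h x)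
  have hsup : (⨆ y, h y) ≤ ‖h‖ := ciSup_le fun y => h.apply_le_norm y
  have hx : h x ≤ ‖h‖ := h.apply_le_norm x
  have haC : 0 ≤ a * C := mul_nonneg ha ENNReal.toReal_nonneg
  calc eulerStep Q a f x - eulerStep Q a g x = h x + a * (Q f x - Q g x) := by
        simp [eulerStep, h]; ring
    _ ≤ (1 - a * C) * h x + a * C * (⨆ y, h y) := by nlinarith
    _ ≤ (1 - a * C) * ‖h‖ + a * C * ‖h‖ := by gcongr
    _ = ‖h‖ := by ring

lemma lipschitzWith_eulerStep : LipschitzWith 1 (eulerStep Q a) := by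
  refine LipschitzWith.mk_one fun f g => ?_
  rw [dist_eq_norm, dist_eq_norm]
  refine (norm_le (norm_nonneg _)).2 fun x => abs_le.2 ⟨?_, ?_⟩
  · have := eulerStep_sub_apply_le hQ hQb ha haQ g f x
    rw [norm_sub_rev] at this
    rw [BoundedContinuousFunction.sub_apply]
    linarith
  · exact eulerStep_sub_apply_le hQ hQb ha haQ f g x

lemma norm_iterate_eulerStep_le (k : ℕ) (f : X →ᵇ ℝ) : ‖(eulerStep Q a)^[k] f‖ ≤ ‖f‖ := by
  have hfix : (eulerStep Q a)^[k] 0 = 0 :=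
    Function.iterate_fixed (by simp [eulerStep, hQ.map_zero]) k
  simpa [hfix] using ((lipschitzWith_eulerStep hQ hQb ha haQ).iterate k).dist_le_mul f 0

end EulerScheme

lemma norm_euler_sub_euler_le {X : Type*} [TopologicalSpace X] [DiscreteTopology X] {Q : Op X}
    (hQ : IsSublinearRate Q) (hQb : opSemiNorm Q ≠ ⊤) {s t : ℝ} (hs : 0 ≤ s) (ht : 0 ≤ t)
    {n : ℕ} (hsn : s * (opSemiNorm Q).toReal ≤ n) (htn : t * (opSemiNorm Q).toReal ≤ n)
    (f : X →ᵇ ℝ) :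
    ‖euler Q s n f - euler Q t n f‖ ≤ |s - t| * (opSemiNorm Q).toReal * ‖f‖ := by
  set C := (opSemiNorm Q).toReal
  rcases n.eq_zero_or_pos with rfl | hn
  · simpa [euler] using by positivity
  have hn' : (0 : ℝ) < n := by exact_mod_cast hn
  have hstep {r : ℝ} (hrn : r * C ≤ n) : r / n * C ≤ 1 := by
    rwa [div_mul_eq_mul_div, div_le_one₀ hn']
  have hdefect (k : ℕ) : dist (eulerStep Q (s / n) ((eulerStep Q (t / n))^[k] f))
      (eulerStep Q (t / n) ((eulerStep Q (t / n))^[k] f)) ≤ |s / n - t / n| * (C * ‖f‖) := by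
    rw [dist_eq_norm]
    refine (norm_eulerStep_sub_eulerStep_le Q _ _ _).trans ?_
    gcongr
    refine (norm_apply_le_toReal_opSemiNorm_mul hQb hQ.map_zero _).trans ?_
    gcongr
    exact norm_iterate_eulerStep_le hQ hQb (by positivity) (hstep htn) k f
  rw [euler_eq_iterate_eulerStep, euler_eq_iterate_eulerStep, ← dist_eq_norm]
  calc _ ≤ n * (|s / n - t / n| * (C * ‖f‖)) :=
        dist_iterate_le_of_lipschitzWith_one
          (lipschitzWith_eulerStep hQ hQb (by positivity) (hstep hsn)) hdefect n
    _ = |s - t| * C * ‖f‖ := by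
        rw [← _root_.sub_div, abs_div, abs_of_pos hn']
        field_simp

theorem stmt_10_general {X : Type*} [TopologicalSpace X] [DiscreteTopology X]
    (Q : Op X) (hQ : IsSublinearRate Q) (hQb : opSemiNorm Q ≠ ⊤)
    (E : ℝ → Op X)
    (hE : ∀ t : ℝ, 0 ≤ t → Tendsto (fun n => opDist (euler Q t n) (E t)) atTop (nhds 0)) :
    ∀ s t : ℝ, 0 ≤ s → 0 ≤ t →
      opSemiNorm (E s - E t) ≤ ENNReal.ofReal |s - t| * opSemiNorm Q := by
  intro s t hs ht
  refine opSemiNorm_sub_le_of_tendsto (hE s hs) (hE t ht) ?_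
  filter_upwards [tendsto_natCast_atTop_atTop.eventually_ge_atTop (s * (opSemiNorm Q).toReal),
    tendsto_natCast_atTop_atTop.eventually_ge_atTop (t * (opSemiNorm Q).toReal)] with n hsn htn
  rw [← ENNReal.ofReal_toReal hQb, ← ENNReal.ofReal_mul (abs_nonneg _)]
  exact opSemiNorm_le_ofReal (norm_euler_sub_euler_le hQ hQb hs ht hsn htn)

theorem stmt_10 {X : Type*} [Countable X] [TopologicalSpace X] [DiscreteTopology X]
    (Q : Op X) (hQ : IsSublinearRate Q) (hQb : opSemiNorm Q ≠ ⊤)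
    (E : ℝ → Op X)
    (hE : ∀ t : ℝ, 0 ≤ t → Tendsto (fun n => opDist (euler Q t n) (E t)) atTop (nhds 0)) :
    ∀ s t : ℝ, 0 ≤ s → 0 ≤ t →
      opSemiNorm (E s - E t) ≤ ENNReal.ofReal |s - t| * opSemiNorm Q :=
  stmt_10_general Q hQ hQb E hE
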